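/- Let X be a Hausdorff topological space and let Γ ⊆ Homeo(X) be a subgroup with the contraction property. Let f, h ∈ Homeo(X) and suppose Supp(f) ≠ X. If there exists a group isomorphism φ : ⟨Γ, f⟩ → ⟨Γ, h⟩ such that φ(γ) = γ for every γ ∈ Γ and φ(f) = h, then h = f. -/

import Mathlib

open Set Topology

variable {X : Type*} [TopologicalSpace X]

/-- The group of self-homeomorphisms of `X`, with `(f * g) x = f (g x)`. -/
instance : Group (X ≃ₜ X) where
  mul f g := g.trans f
  one := Homeomorph.refl X
  inv := Homeomorph.symm
  mul_assoc _ _ _ := Homeomorph.ext fun _ => rfl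
  one_mul _ := Homeomorph.ext fun _ => rfl
  mul_one _ := Homeomorph.ext fun _ => rfl
  inv_mul_cancel f := Homeomorph.ext fun x => f.symm_apply_apply x

/-- The support of a homeomorphism: the closure of the set of non-fixed points. -/
def Supp (f : X ≃ₜ X) : Set X := closure {x | f x ≠ x}

/-- A subgroup `Γ ⊆ Homeo(X)` has the contraction property if for every nonempty open set
`U` there is `γ ∈ Γ` with `γ(X ∖ U) ⊆ U`. -/
def ContractionProperty (Γ : Subgroup (X ≃ₜ X)) : Prop :=
  ∀ U : Set X, IsOpen U → U.Nonempty → ∃ γ ∈ Γ, γ '' Uᶜ ⊆ U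

/-!
The isomorphism fixes `Γ` and sends `f` to `h`, so it matches each conjugate of `f` by a word in
`Γ ∪ {f}` with the conjugate of `h` by the same word in `Γ ∪ {h}`, and two such conjugates commute
on one side iff they do on the other. Commutation is produced by disjoint supports, and the
contraction property conjugates `Supp f` into any nonempty open set. This shows first that `h`
fixes the complement of `Supp f`, and then that `h` agrees with `f`.
-/

lemma MulEquiv.commute_coe_apply_iff {G : Type*} [Group G] {H K : Subgroup G} (φ : H ≃* K)
    {a b : H} : Commute (φ a : G) (φ b) ↔ Commute (a : G) b :=
  (commute_map_iff K.subtype_injective).trans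
    ((commute_map_iff φ.injective).trans (commute_map_iff H.subtype_injective).symm)

lemma apply_eq_self_of_notMem_supp {f : X ≃ₜ X} {x : X} (hx : x ∉ Supp f) : f x = x :=
  not_not.mp fun h => hx (subset_closure h)

lemma supp_subset_of_forall_notMem_apply_eq_self {f : X ≃ₜ X} {S : Set X} (hS : IsClosed S)
    (hf : ∀ x ∉ S, f x = x) : Supp f ⊆ S :=
  closure_minimal (fun x hx => not_not.mp fun hxS => hx (hf x hxS)) hS

lemma supp_conj (g f : X ≃ₜ X) : Supp (g * f * g⁻¹) = g '' Supp f := by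
  have hmoved : {x | (g * f * g⁻¹) x ≠ x} = g '' {x | f x ≠ x} := by
    rw [← g.preimage_symm]
    ext x
    simp only [mem_ofPred_eq, mem_preimage, Homeomorph.mul_apply, Homeomorph.inv_apply, ne_eq,
      ← g.eq_symm_apply]
  rw [Supp, hmoved, ← Homeomorph.image_closure, Supp]

lemma apply_mem_supp {f : X ≃ₜ X} {x : X} (hx : x ∈ Supp f) : f x ∈ Supp f := by
  have himage := supp_conj f f
  rw [mul_inv_cancel_right] at himage
  exact himage ▸ mem_image_of_mem f hx

lemma commute_of_disjoint_supp {f g : X ≃ₜ X} (hfg : Disjoint (Supp f) (Supp g)) :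
    Commute f g := by
  ext x
  simp only [Homeomorph.mul_apply]
  by_cases hf : x ∈ Supp f
  · rw [apply_eq_self_of_notMem_supp (hfg.notMem_of_mem_left hf),
      apply_eq_self_of_notMem_supp (hfg.notMem_of_mem_left (apply_mem_supp hf))]
  by_cases hg : x ∈ Supp g
  · rw [apply_eq_self_of_notMem_supp hf,
      apply_eq_self_of_notMem_supp (hfg.notMem_of_mem_right (apply_mem_supp hg))]
  · rw [apply_eq_self_of_notMem_supp hf, apply_eq_self_of_notMem_supp hg,
      apply_eq_self_of_notMem_supp hf]

lemma eq_one_of_commute_of_supp_subset {a b : X ≃ₜ X} {T : Set X} (hab : Commute a b)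
    (hb : Supp b ⊆ T) (ha : Disjoint (a '' T) T) : b = 1 := by
  ext x
  by_cases hx : x ∈ T
  · have hax : b (a x) = a x :=
      apply_eq_self_of_notMem_supp fun h => ha.notMem_of_mem_left (mem_image_of_mem a hx) (hb h)
    exact a.injective ((DFunLike.congr_fun hab x).trans hax)
  · exact apply_eq_self_of_notMem_supp fun h => hx (hb h)

/-- With `k = γ g γ⁻¹`, both `g (k z)` and `k (g z)` are computed by alternately leaving `P`
under `g` and returning to `P` under `γ`, landing outside and inside `P` respectively. -/
lemma not_commute_conj_of_image_compl_subset {g γ : X ≃ₜ X} {P : Set X} {z : X}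
    (hg : Disjoint (g '' P) P) (hγ : γ '' Pᶜ ⊆ P \ {z}) (hz : z ∈ P) :
    ¬Commute g (γ * g * γ⁻¹) := by
  intro hcomm
  have hg_out : ∀ {y}, y ∈ P → g y ∉ P := fun hy => hg.notMem_of_mem_left (mem_image_of_mem g hy)
  have hγ_in : ∀ {y}, y ∉ P → γ y ∈ P := fun hy => (hγ (mem_image_of_mem γ hy)).1
  have hγ_symm : ∀ {y}, y ∉ P \ {z} → γ.symm y ∈ P := fun {y} hy => by
    by_contra h
    exact hy (γ.apply_symm_apply y ▸ hγ (mem_image_of_mem γ h))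
  have hz' : z ∉ P \ {z} := fun h => h.2 rfl
  have hgz : g z ∉ P \ {z} := fun h => hg_out hz h.1
  have hleft : g (γ (g (γ.symm z))) ∉ P := hg_out (hγ_in (hg_out (hγ_symm hz')))
  have hright : γ (g (γ.symm (g z))) ∈ P := hγ_in (hg_out (hγ_symm hgz))
  have heq : g (γ (g (γ.symm z))) = γ (g (γ.symm (g z))) := DFunLike.congr_fun hcomm z
  exact hleft (heq ▸ hright)

lemma exists_isOpen_disjoint_image_image {Y : Type*} [TopologicalSpace Y] [T2Space Y]
    {f g : X → Y} (hf : Continuous f) (hg : Continuous g) {x : X} (hx : f x ≠ g x) :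
    ∃ U, IsOpen U ∧ x ∈ U ∧ Disjoint (f '' U) (g '' U) := by
  obtain ⟨A, B, hA, hB, hxA, hxB, hAB⟩ := t2_separation hx
  exact ⟨f ⁻¹' A ∩ g ⁻¹' B, (hA.preimage hf).inter (hB.preimage hg), ⟨hxA, hxB⟩,
    hAB.mono (image_subset_iff.2 inter_subset_left) (image_subset_iff.2 inter_subset_right)⟩

lemma exists_isOpen_subset_disjoint_image_self [T2Space X] {f : X → X} (hf : Continuous f)
    {x : X} (hx : f x ≠ x) {V : Set X} (hV : IsOpen V) (hxV : x ∈ V) :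
    ∃ U ⊆ V, IsOpen U ∧ x ∈ U ∧ Disjoint (f '' U) U := by
  obtain ⟨U, hU, hxU, hfU⟩ := exists_isOpen_disjoint_image_image hf continuous_id hx
  rw [image_id] at hfU
  exact ⟨U ∩ V, inter_subset_right, hU.inter hV, ⟨hxU, hxV⟩,
    hfU.mono (image_mono inter_subset_left) inter_subset_left⟩

/-- Every point lies in `V` or is moved into `V` by the inverse of a contraction of `V`, so after
translating `W` by an element of `Γ` it meets `V`, and one contracts into the intersection. -/
lemma ContractionProperty.exists_image_compl_subset {Γ : Subgroup (X ≃ₜ X)}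
    (hΓ : ContractionProperty Γ) {V W : Set X} (hV : IsOpen V) (hV' : V.Nonempty)
    (hW : IsOpen W) (hW' : W.Nonempty) : ∃ δ ∈ Γ, δ '' Vᶜ ⊆ W := by
  obtain ⟨w, hw⟩ := hW'
  obtain ⟨g, hg, hgw⟩ : ∃ g ∈ Γ, g.symm w ∈ V := by
    by_cases hwV : w ∈ V
    · exact ⟨1, one_mem Γ, hwV⟩
    obtain ⟨γ, hγ, hγV⟩ := hΓ V hV hV'
    refine ⟨γ, hγ, not_not.mp fun h => hwV ?_⟩
    exact γ.apply_symm_apply w ▸ hγV (mem_image_of_mem γ h)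
  obtain ⟨δ, hδ, hδV⟩ := hΓ (V ∩ g ⁻¹' W) (hV.inter (hW.preimage g.continuous))
    ⟨g.symm w, hgw, by simpa using hw⟩
  refine ⟨g * δ, mul_mem hg hδ, ?_⟩
  rintro _ ⟨x, hx, rfl⟩
  exact (hδV ⟨x, fun h => hx h.1, rfl⟩).2

lemma ContractionProperty.not_isOpen_singleton {Γ : Subgroup (X ≃ₜ X)}
    (hΓ : ContractionProperty Γ) {g : X ≃ₜ X} {x z : X} (hx : g x ≠ x) (hz : g z = z) :
    ¬IsOpen {z} := by
  intro hopen
  obtain ⟨γ, -, hγ⟩ := hΓ {z} hopen (singleton_nonempty z)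
  have hxz : x ≠ z := fun h => hx (h ▸ hz)
  have hgxz : g x ≠ z := fun h => hxz (g.injective (h.trans hz.symm))
  exact hx (γ.injective ((hγ (mem_image_of_mem γ hgxz)).trans (hγ (mem_image_of_mem γ hxz)).symm))

lemma exists_apply_ne_of_ne_one {f : X ≃ₜ X} (hf : f ≠ 1) : ∃ x, f x ≠ x :=
  not_forall.mp fun H => hf (Homeomorph.ext H)

lemma supp_conj_subset {δ g : X ≃ₜ X} {S V : Set X} (hg : Supp g ⊆ S) (hδ : δ '' S ⊆ V) :
    Supp (δ * g * δ⁻¹) ⊆ V :=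
  (supp_conj δ g).trans_subset ((image_mono hg).trans hδ)

section

variable [T2Space X] {Γ : Subgroup (X ≃ₜ X)} {f h : X ≃ₜ X}

/-- If `h` moved a point `z` off `Supp f`, contract the complement of a neighbourhood
`P ⊆ (Supp f)ᶜ` of `z` with `h '' P ∩ P = ∅` into `P \ {z}`: the conjugate of `f` then commutes with `f`, while the
conjugate of `h` cannot commute with `h`. -/
lemma apply_eq_self_of_notMem_supp_of_commute_conj (hΓ : ContractionProperty Γ) (hf : f ≠ 1)
    (hcomm : ∀ γ ∈ Γ, Commute f (γ * f * γ⁻¹) → Commute h (γ * h * γ⁻¹))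
    {z : X} (hz : z ∉ Supp f) : h z = z := by
  by_contra hhz
  obtain ⟨P, hPf, hP, hzP, hhP⟩ :=
    exists_isOpen_subset_disjoint_image_self h.continuous hhz isClosed_closure.isOpen_compl hz
  have hPz : (P \ {z}).Nonempty := by
    rw [nonempty_iff_ne_empty, Ne, sdiff_eq_empty]
    intro hPz
    obtain ⟨x, hx⟩ := exists_apply_ne_of_ne_one hf
    refine hΓ.not_isOpen_singleton hx (apply_eq_self_of_notMem_supp hz) ?_
    rwa [← hPz.antisymm (singleton_subset_iff.2 hzP)]
  obtain ⟨γ, hγ, hγP⟩ := hΓ _ (hP.sdiff isClosed_singleton) hPz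
  have hγP' : γ '' Pᶜ ⊆ P \ {z} := (image_mono (compl_subset_compl.2 sdiff_subset)).trans hγP
  have hsupp : Supp (γ * f * γ⁻¹) ⊆ (Supp f)ᶜ :=
    supp_conj_subset (fun x hx hxP => hPf hxP hx) (hγP'.trans (sdiff_subset.trans hPf))
  exact not_commute_conj_of_image_compl_subset hhP hγP' hzP
    (hcomm γ hγ (commute_of_disjoint_supp (disjoint_compl_right.mono_right hsupp)))

/-- If `f x ≠ h x`, pick a neighbourhood `U` of `x` with `f '' U ∩ h '' U = ∅`. Then
`c = f δ f δ⁻¹ f⁻¹` lives in `f '' U` and its `h`-counterpart in `h '' U`; a conjugate `ε f ε⁻¹`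
supported in a set `T ⊆ f '' U` with `c '' T ∩ T = ∅` commutes with `c`, since the counterparts
have disjoint supports, and is therefore trivial. -/
lemma eq_of_supp_subset_of_commute_conj (hΓ : ContractionProperty Γ) (hf : f ≠ 1)
    (hfX : Supp f ≠ univ) (hsupp : Supp h ⊆ Supp f)
    (hcomm : ∀ δ ∈ Γ, ∀ ε ∈ Γ, Commute (h * (δ * h * δ⁻¹) * h⁻¹) (ε * h * ε⁻¹) →
      Commute (f * (δ * f * δ⁻¹) * f⁻¹) (ε * f * ε⁻¹)) :
    h = f := by
  have hW : IsOpen (Supp f)ᶜ := isClosed_closure.isOpen_compl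
  have hW' : ((Supp f)ᶜ).Nonempty := nonempty_compl.2 hfX
  ext x
  by_contra hx
  obtain ⟨U, hU, hxU, hfhU⟩ :=
    exists_isOpen_disjoint_image_image f.continuous h.continuous (Ne.symm hx)
  obtain ⟨δ, hδ, hδU⟩ := hΓ.exists_image_compl_subset hW hW' hU ⟨x, hxU⟩
  rw [compl_compl] at hδU
  set c := f * (δ * f * δ⁻¹) * f⁻¹
  have hc : Supp c ⊆ f '' U := supp_conj_subset (supp_conj_subset subset_rfl hδU) subset_rfl
  have hc' : Supp (h * (δ * h * δ⁻¹) * h⁻¹) ⊆ h '' U :=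
    supp_conj_subset (supp_conj_subset hsupp hδU) subset_rfl
  obtain ⟨r, hr⟩ := exists_apply_ne_of_ne_one (f := c)
    fun h1 => hf (conj_eq_one_iff.mp (conj_eq_one_iff.mp h1))
  obtain ⟨T, hTU, hT, hrT, hcT⟩ := exists_isOpen_subset_disjoint_image_self c.continuous hr
    (f.isOpenMap U hU) (hc (subset_closure hr))
  obtain ⟨ε, hε, hεT⟩ := hΓ.exists_image_compl_subset hW hW' hT ⟨r, hrT⟩
  rw [compl_compl] at hεT
  have hcε : Commute c (ε * f * ε⁻¹) := hcomm δ hδ ε hε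
    (commute_of_disjoint_supp (hfhU.symm.mono hc' ((supp_conj_subset hsupp hεT).trans hTU)))
  exact hf (conj_eq_one_iff.mp
    (eq_one_of_commute_of_supp_subset hcε (supp_conj_subset subset_rfl hεT) hcT))

end

theorem map_recognition_contraction
    {X : Type*} [TopologicalSpace X] [T2Space X]
    (Γ : Subgroup (X ≃ₜ X)) (hΓ : ContractionProperty Γ)
    (f h : X ≃ₜ X) (hf : Supp f ≠ Set.univ)
    (φ : Subgroup.closure ((Γ : Set (X ≃ₜ X)) ∪ {f}) ≃*
         Subgroup.closure ((Γ : Set (X ≃ₜ X)) ∪ {h}))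
    (hφΓ : ∀ (γ : X ≃ₜ X) (hγ : γ ∈ Γ),
      ((φ ⟨γ, Subgroup.subset_closure (Set.mem_union_left _ hγ)⟩ : _) : X ≃ₜ X) = γ)
    (hφf : ((φ ⟨f, Subgroup.subset_closure
        (Set.mem_union_right _ (Set.mem_singleton f))⟩ : _) : X ≃ₜ X) = h) :
    h = f := by
  by_cases hf1 : f = 1
  · subst hf1
    exact hφf.symm.trans (congrArg Subtype.val (map_one φ))
  let F : Subgroup.closure ((Γ : Set (X ≃ₜ X)) ∪ {f}) :=
    ⟨f, Subgroup.subset_closure (Set.mem_union_right _ (Set.mem_singleton f))⟩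
  let lift (γ : X ≃ₜ X) (hγ : γ ∈ Γ) : Subgroup.closure ((Γ : Set (X ≃ₜ X)) ∪ {f}) :=
    ⟨γ, Subgroup.subset_closure (Set.mem_union_left _ hγ)⟩
  have hF : (φ F : X ≃ₜ X) = h := hφf
  have hlift : ∀ γ hγ, (φ (lift γ hγ) : X ≃ₜ X) = γ := hφΓ
  have hstep : ∀ z ∉ Supp f, h z = z := by
    refine fun z => apply_eq_self_of_notMem_supp_of_commute_conj hΓ hf1 fun γ hγ hc => ?_
    have key := φ.commute_coe_apply_iff (a := F) (b := lift γ hγ * F * (lift γ hγ)⁻¹)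
    simp only [map_mul, map_inv, Subgroup.coe_mul, Subgroup.coe_inv, hF, hlift] at key
    exact key.mpr hc
  refine eq_of_supp_subset_of_commute_conj hΓ hf1 hf
    (supp_subset_of_forall_notMem_apply_eq_self isClosed_closure hstep) fun δ hδ ε hε hc => ?_
  have key := φ.commute_coe_apply_iff (a := F * (lift δ hδ * F * (lift δ hδ)⁻¹) * F⁻¹)
    (b := lift ε hε * F * (lift ε hε)⁻¹)
  simp only [map_mul, map_inv, Subgroup.coe_mul, Subgroup.coe_inv, hF, hlift] at key
  exact key.mp hc
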